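/- Let F : ℝᵈ → ℝ be integrable and supported in the ball B(0,R), and let (Wₙ) be bounded measurable sets with |Wₙ| → ∞ and |∂Wₙ ⊕ R| = o(|Wₙ|). Then (1/|Wₙ|) ∫_{Wₙ} ∫_{Wₙ} F(v − u) dv du → ∫_{ℝᵈ} F(t) dt as n → ∞. -/

import Mathlib

open MeasureTheory Metric Filter Set Topology

/-! For `u ∈ W` at distance more than `R` from `∂W` the ball `B(u, R)` lies in `W`, so the inner
integral `∫_W F(v - u) dv` is the whole of `∫ F`. The double integral therefore differs from
`|W| ∫ F` only through the boundary layer `W ∩ (∂W ⊕ R)`, where the inner integral deviates from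
`∫ F` by at most `2 ‖F‖₁`; after dividing by `|W|` the error is `O(|∂W ⊕ R| / |W|)`. -/

theorem closedBall_subset_of_notMem_cthickening_frontier {V : Type*} [NormedAddCommGroup V]
    [NormedSpace ℝ V] [FiniteDimensional ℝ V] {A : Set V} {u : V} {R : ℝ} (huA : u ∈ A)
    (hu : u ∉ cthickening R (frontier A)) : closedBall u R ⊆ A := by
  intro v hv
  by_contra hvA
  obtain ⟨y, hy, hdist⟩ :=
    exists_mem_frontier_infDist_compl_eq_dist huA ((ne_univ_iff_exists_notMem A).2 ⟨v, hvA⟩)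
  refine hu (mem_cthickening_of_dist_le u y R _ hy ?_)
  rw [← hdist]
  exact (infDist_le_dist_of_mem hvA).trans (mem_closedBall'.mp hv)

theorem tendsto_inv_smul_of_norm_sub_smul_le {α E : Type*} [NormedAddCommGroup E]
    [NormedSpace ℝ E] {l : Filter α} {a : α → E} {v b : α → ℝ} {L : E} {K : ℝ}
    (hv : Tendsto v l atTop) (hb : Tendsto (fun n => b n / v n) l (𝓝 0))
    (h : ∀ n, ‖a n - v n • L‖ ≤ K * b n) : Tendsto (fun n => (v n)⁻¹ • a n) l (𝓝 L) := by
  rw [tendsto_iff_norm_sub_tendsto_zero]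
  refine squeeze_zero' (.of_forall fun _ => norm_nonneg _) ?_ (by simpa using hb.const_mul K)
  filter_upwards [hv.eventually_gt_atTop 0] with n hn
  calc ‖(v n)⁻¹ • a n - L‖ = (v n)⁻¹ * ‖a n - v n • L‖ := by
        rw [← norm_smul_of_nonneg (inv_nonneg.2 hn.le), smul_sub, smul_smul,
          inv_mul_cancel₀ hn.ne', one_smul]
    _ ≤ (v n)⁻¹ * (K * b n) := by gcongr; exact h n
    _ = K * (b n / v n) := by ring

section Translates

variable {G : Type*} [AddGroup G] [MeasurableSpace G] [MeasurableAdd₂ G]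
  {μ : Measure G} [μ.IsAddRightInvariant]
  {E : Type*} [NormedAddCommGroup E] [NormedSpace ℝ E] {F : G → E}

theorem norm_setIntegral_comp_sub_le (hF : Integrable F μ) (A : Set G) (u : G) :
    ‖∫ v in A, F (v - u) ∂μ‖ ≤ ∫ t, ‖F t‖ ∂μ :=
  calc ‖∫ v in A, F (v - u) ∂μ‖ ≤ ∫ v in A, ‖F (v - u)‖ ∂μ := norm_integral_le_integral_norm _
    _ ≤ ∫ v, ‖F (v - u)‖ ∂μ :=
      setIntegral_le_integral (hF.comp_sub_right u).norm (.of_forall fun _ => norm_nonneg _)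
    _ = ∫ t, ‖F t‖ ∂μ := integral_sub_right_eq_self (fun t => ‖F t‖) u

variable [MeasurableNeg G] [SFinite μ]

theorem integrableOn_setIntegral_comp_sub (hF : Integrable F μ) {A : Set G} (hA : μ A ≠ ⊤) :
    IntegrableOn (fun u => ∫ v in A, F (v - u) ∂μ) A μ := by
  have : IsFiniteMeasure (μ.restrict A) := isFiniteMeasure_restrict.mpr hA
  have hmeas : AEStronglyMeasurable (fun p : G × G => F (p.2 - p.1))
      ((μ.restrict A).prod (μ.restrict A)) := by
    rw [Measure.prod_restrict]
    exact (hF.1.comp_quasiMeasurePreserving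
      ((quasiMeasurePreserving_sub_of_right_invariant μ μ).comp
        Measure.measurePreserving_swap.quasiMeasurePreserving)).restrict
  have hint : Integrable (fun p : G × G => F (p.2 - p.1)) ((μ.restrict A).prod (μ.restrict A)) := by
    refine (integrable_prod_iff hmeas).mpr ⟨.of_forall fun u => (hF.comp_sub_right u).restrict, ?_⟩
    refine (integrable_const (∫ t, ‖F t‖ ∂μ)).mono' hmeas.norm.integral_prod_right'
      (.of_forall fun u => ?_)
    simpa using norm_setIntegral_comp_sub_le hF.norm A u
  exact hint.integral_prod_left

end Translates

section BoundaryLayer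

variable {V : Type*} [NormedAddCommGroup V] [MeasurableSpace V] [BorelSpace V]
  {μ : Measure V} [μ.IsAddRightInvariant]
  {E : Type*} [NormedAddCommGroup E] [NormedSpace ℝ E] {F : V → E} {R : ℝ}

theorem setIntegral_comp_sub_eq_integral (hF : ∀ t, R < ‖t‖ → F t = 0) {A : Set V} {u : V}
    (hball : closedBall u R ⊆ A) : ∫ v in A, F (v - u) ∂μ = ∫ t, F t ∂μ := by
  rw [setIntegral_eq_integral_of_forall_compl_eq_zero fun v hv => hF _ ?_]
  · exact integral_sub_right_eq_self F u
  · rw [← dist_eq_norm]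
    exact not_le.mp fun h => hv (hball (mem_closedBall.mpr h))

variable [NormedSpace ℝ V] [FiniteDimensional ℝ V] [SFinite μ] [CompleteSpace E]

theorem norm_setIntegral_setIntegral_comp_sub_sub_smul_le (hFint : Integrable F μ)
    (hF : ∀ t, R < ‖t‖ → F t = 0) {A : Set V} (hAm : MeasurableSet A) (hA : μ A ≠ ⊤) :
    ‖(∫ u in A, ∫ v in A, F (v - u) ∂μ ∂μ) - μ.real A • ∫ t, F t ∂μ‖ ≤
      2 * (∫ t, ‖F t‖ ∂μ) * μ.real (A ∩ cthickening R (frontier A)) := by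
  set I := ∫ t, F t ∂μ
  set C := ∫ t, ‖F t‖ ∂μ
  have hdev : ∀ u, ‖∫ v in A, F (v - u) ∂μ - I‖ ≤ 2 * C := fun u =>
    calc _ ≤ ‖∫ v in A, F (v - u) ∂μ‖ + ‖I‖ := norm_sub_le _ _
      _ ≤ C + C := add_le_add (norm_setIntegral_comp_sub_le hFint A u)
          (norm_integral_le_integral_norm F)
      _ = 2 * C := by ring
  have hinterior : ∀ u ∈ A \ (A ∩ cthickening R (frontier A)),
      ∫ v in A, F (v - u) ∂μ - I = 0 := by
    rintro u ⟨huA, hu⟩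
    rw [sub_eq_zero]
    exact setIntegral_comp_sub_eq_integral hF
      (closedBall_subset_of_notMem_cthickening_frontier huA fun h => hu ⟨huA, h⟩)
  calc _ = ‖∫ u in A, (∫ v in A, F (v - u) ∂μ - I) ∂μ‖ := by
        rw [integral_sub (integrableOn_setIntegral_comp_sub hFint hA) (integrableOn_const hA),
          setIntegral_const]
    _ = ‖∫ u in A ∩ cthickening R (frontier A), (∫ v in A, F (v - u) ∂μ - I) ∂μ‖ := by
        rw [setIntegral_eq_of_subset_of_forall_sdiff_eq_zero hAm inter_subset_left hinterior]
    _ ≤ _ := norm_setIntegral_le_of_norm_le_const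
        ((measure_mono inter_subset_left).trans_lt hA.lt_top) fun u _ => hdev u

end BoundaryLayer

theorem average_double_integral_tendsto_integral_general {d : ℕ} (R : ℝ)
    (F : EuclideanSpace ℝ (Fin d) → ℝ)
    (hFint : Integrable F)
    (hFsupp : ∀ t, R < ‖t‖ → F t = 0)
    (W : ℕ → Set (EuclideanSpace ℝ (Fin d)))
    (hWb : ∀ n, Bornology.IsBounded (W n))
    (hWm : ∀ n, MeasurableSet (W n))
    (hvol : Tendsto (fun n => (volume (W n)).toReal) atTop atTop)
    (hbdry : Tendsto
      (fun n => (volume (cthickening R (frontier (W n)))).toReal / (volume (W n)).toReal)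
      atTop (nhds 0)) :
    Tendsto
      (fun n => (1 / (volume (W n)).toReal) * ∫ u in W n, ∫ v in W n, F (v - u))
      atTop (nhds (∫ t, F t)) := by
  have hbound : ∀ n, ‖(∫ u in W n, ∫ v in W n, F (v - u)) - (volume (W n)).toReal • ∫ t, F t‖ ≤
      2 * (∫ t, ‖F t‖) * (volume (cthickening R (frontier (W n)))).toReal := fun n => by
    have hlayer : Bornology.IsBounded (cthickening R (frontier (W n))) :=
      ((hWb n).closure.subset frontier_subset_closure).cthickening
    calc _ ≤ 2 * (∫ t, ‖F t‖) * volume.real (W n ∩ cthickening R (frontier (W n))) :=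
          norm_setIntegral_setIntegral_comp_sub_sub_smul_le hFint hFsupp (hWm n)
            (hWb n).measure_lt_top.ne
      _ ≤ _ := by
        gcongr
        exact measureReal_mono inter_subset_right hlayer.measure_lt_top.ne
  simpa only [one_div, smul_eq_mul] using tendsto_inv_smul_of_norm_sub_smul_le hvol hbdry hbound

theorem average_double_integral_tendsto_integral {d : ℕ} (R : ℝ) (hR : 0 < R)
    (F : EuclideanSpace ℝ (Fin d) → ℝ)
    (hFint : Integrable F)
    (hFsupp : ∀ t, R < ‖t‖ → F t = 0)
    (W : ℕ → Set (EuclideanSpace ℝ (Fin d)))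
    (hWb : ∀ n, Bornology.IsBounded (W n))
    (hWm : ∀ n, MeasurableSet (W n))
    (hvol : Tendsto (fun n => (volume (W n)).toReal) atTop atTop)
    (hbdry : Tendsto
      (fun n => (volume (cthickening R (frontier (W n)))).toReal / (volume (W n)).toReal)
      atTop (nhds 0)) :
    Tendsto
      (fun n => (1 / (volume (W n)).toReal) * ∫ u in W n, ∫ v in W n, F (v - u))
      atTop (nhds (∫ t, F t)) :=
  average_double_integral_tendsto_integral_general R F hFint hFsupp W hWb hWm hvol hbdry
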